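/- arXiv:0906.5548 — 4 statements merged into one kernel-verified Lean document; each statement's English description precedes it below -/
import Mathlib

section
/- Define d(g,h) = Σ_{p ∈ P} d_p(g,h) for g,h ∈ GL_d(ℚ), where the sum is over all primes and the archimedean place. Then there exists a constant C > 0 such that for all g ∈ GL_d(ℚ) and all R ≥ 0, the ball B(g,R) = {h ∈ GL_d(ℚ) : d(g,h) ≤ R} has cardinality at most C·e^{CR}. -/
open Matrix
noncomputable def lnplus (x : ℝ) : ℝ := max (Real.log x) 0

noncomputable def opNormP (p : ℕ) [Fact p.Prime] {n : Type*} [Fintype n] [DecidableEq n]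
    (g : Matrix n n ℚ_[p]) : ℝ :=
  ‖LinearMap.toContinuousLinearMap g.mulVecLin‖

noncomputable def dP (p : ℕ) [Fact p.Prime] {d : ℕ}
    (g h : GL (Fin d) ℚ_[p]) : ℝ :=
  lnplus (opNormP p ((g⁻¹ * h : GL (Fin d) ℚ_[p]) : Matrix (Fin d) (Fin d) ℚ_[p]))
  + lnplus (opNormP p ((h⁻¹ * g : GL (Fin d) ℚ_[p]) : Matrix (Fin d) (Fin d) ℚ_[p]))

noncomputable def opNormR {d : ℕ} (g : Matrix (Fin d) (Fin d) ℝ) : ℝ :=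
  ‖LinearMap.toContinuousLinearMap (Matrix.toEuclideanLin g)‖

noncomputable def dR {d : ℕ} (g h : GL (Fin d) ℝ) : ℝ :=
  lnplus (opNormR ((g⁻¹ * h : GL (Fin d) ℝ) : Matrix (Fin d) (Fin d) ℝ))
  + lnplus (opNormR ((h⁻¹ * g : GL (Fin d) ℝ) : Matrix (Fin d) (Fin d) ℝ))

noncomputable def dQ {d : ℕ} (g h : GL (Fin d) ℚ) : ℝ :=
  dR (Matrix.GeneralLinearGroup.map (algebraMap ℚ ℝ) g)
      (Matrix.GeneralLinearGroup.map (algebraMap ℚ ℝ) h)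
  + ∑' p : Nat.Primes,
      (letI : Fact p.1.Prime := ⟨p.2⟩
       dP p.1 (Matrix.GeneralLinearGroup.map (algebraMap ℚ ℚ_[p.1]) g)
              (Matrix.GeneralLinearGroup.map (algebraMap ℚ ℚ_[p.1]) h))

/-!
If `d(g, h) ≤ R`, then every entry `q` of `g⁻¹ h` is bounded at each place by the corresponding
operator norm of `g⁻¹ h`, so `log⁺ |q|_∞ + Σ_p log⁺ |q|_p ≤ R`. The `p`-adic terms add up to at
least `log (den q)`, and `|num q| = |q|_∞ · den q`, so `q` has height at most `e^R`. There are at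
most `3 e^{2R}` such rationals, and `h ↦ g⁻¹ h` is injective, so `#B(g, R) ≤ (3 e^{2R})^{d²}`.
-/

lemma lnplus_nonneg (x : ℝ) : 0 ≤ lnplus x := le_max_right _ _

lemma lnplus_eq_zero_of_le_one {x : ℝ} (hx₀ : 0 ≤ x) (hx₁ : x ≤ 1) : lnplus x = 0 :=
  max_eq_right (Real.log_nonpos hx₀ hx₁)

lemma lnplus_le_lnplus {x y : ℝ} (hx : 0 ≤ x) (hxy : x ≤ y) : lnplus x ≤ lnplus y := by
  rcases hx.eq_or_lt with rfl | hx
  · simp [lnplus]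
  · exact max_le_max (Real.log_le_log hx hxy) le_rfl

lemma le_exp_lnplus {x : ℝ} (hx : 0 ≤ x) : x ≤ Real.exp (lnplus x) := by
  rcases hx.eq_or_lt with rfl | hx
  · exact (Real.exp_pos _).le
  · exact (Real.le_exp_log x).trans (Real.exp_le_exp.mpr (le_max_left _ _))

section PadicOpNorm

variable (p : ℕ) [Fact p.Prime] {n : Type*} [Fintype n] [DecidableEq n]

lemma opNormP_nonneg (m : Matrix n n ℚ_[p]) : 0 ≤ opNormP p m := norm_nonneg _

lemma norm_entry_le_opNormP (m : Matrix n n ℚ_[p]) (i j : n) : ‖m i j‖ ≤ opNormP p m := by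
  have hsingle : ‖(Pi.single j 1 : n → ℚ_[p])‖ ≤ 1 :=
    (pi_norm_le_iff_of_nonneg zero_le_one).mpr fun k => by
      rcases eq_or_ne k j with rfl | hk <;> simp [*]
  calc ‖m i j‖ = ‖(m *ᵥ Pi.single j 1) i‖ := by simp [Matrix.mulVec_single]
    _ ≤ ‖m *ᵥ Pi.single j 1‖ := norm_le_pi_norm _ i
    _ ≤ opNormP p m * ‖(Pi.single j 1 : n → ℚ_[p])‖ :=
        (LinearMap.toContinuousLinearMap m.mulVecLin).le_opNorm _
    _ ≤ opNormP p m := mul_le_of_le_one_right (norm_nonneg _) hsingle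

lemma opNormP_le_one (m : Matrix n n ℚ_[p]) (hm : ∀ i j, ‖m i j‖ ≤ 1) :
    opNormP p m ≤ 1 := by
  refine ContinuousLinearMap.opNorm_le_bound _ zero_le_one fun v => ?_
  rw [one_mul]
  refine (pi_norm_le_iff_of_nonneg (norm_nonneg v)).mpr fun i => ?_
  refine IsUltrametricDist.norm_sum_le_of_forall_le_of_nonneg (norm_nonneg v) fun j _ => ?_
  rw [norm_mul]
  exact (mul_le_mul (hm i j) (norm_le_pi_norm v j) (norm_nonneg _) zero_le_one).trans_eq
    (one_mul _)

end PadicOpNorm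

lemma abs_entry_le_opNormR {d : ℕ} (m : Matrix (Fin d) (Fin d) ℝ) (i j : Fin d) :
    |m i j| ≤ opNormR m := by
  set v : EuclideanSpace ℝ (Fin d) := EuclideanSpace.single j 1
  calc |m i j| = ‖Matrix.toEuclideanLin m v i‖ := by simp [v, Matrix.mulVec_single]
    _ ≤ ‖Matrix.toEuclideanLin m v‖ := PiLp.norm_apply_le _ i
    _ ≤ opNormR m * ‖v‖ :=
        (LinearMap.toContinuousLinearMap (Matrix.toEuclideanLin m)).le_opNorm v
    _ = opNormR m := by simp [v]

-- Agrees definitionally with the `letI` in `dQ`, so the summands of `dQ` are the terms below.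
instance Nat.Primes.fact_prime (p : Nat.Primes) : Fact p.1.Prime := ⟨p.2⟩

lemma Matrix.GeneralLinearGroup.coe_map_inv_mul {n R S : Type*} [Fintype n] [DecidableEq n]
    [CommRing R] [CommRing S] (f : R →+* S) (g h : GL n R) :
    ((map f g)⁻¹ * map f h).val = (g⁻¹ * h).val.map f := by
  rw [← map_inv, ← map_mul]
  rfl

section Entries

variable {d : ℕ} (g h : GL (Fin d) ℚ)

lemma lnplus_abs_entry_le_dR (i j : Fin d) :
    lnplus |((g⁻¹ * h).val i j : ℝ)|
      ≤ dR (Matrix.GeneralLinearGroup.map (algebraMap ℚ ℝ) g)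
          (Matrix.GeneralLinearGroup.map (algebraMap ℚ ℝ) h) := by
  rw [dR, Matrix.GeneralLinearGroup.coe_map_inv_mul]
  refine le_add_of_le_of_nonneg (lnplus_le_lnplus (abs_nonneg _) ?_) (lnplus_nonneg _)
  simpa only [Matrix.map_apply, eq_ratCast] using
    abs_entry_le_opNormR ((g⁻¹ * h).val.map (algebraMap ℚ ℝ)) i j

variable (p : ℕ) [Fact p.Prime]

lemma lnplus_padicNorm_entry_le_dP (i j : Fin d) :
    lnplus (padicNorm p ((g⁻¹ * h).val i j))
      ≤ dP p (Matrix.GeneralLinearGroup.map (algebraMap ℚ ℚ_[p]) g)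
          (Matrix.GeneralLinearGroup.map (algebraMap ℚ ℚ_[p]) h) := by
  rw [dP, Matrix.GeneralLinearGroup.coe_map_inv_mul]
  refine le_add_of_le_of_nonneg (lnplus_le_lnplus (mod_cast padicNorm.nonneg _) ?_)
    (lnplus_nonneg _)
  simpa only [Matrix.map_apply, eq_ratCast, Padic.eq_padicNorm] using
    norm_entry_le_opNormP p ((g⁻¹ * h).val.map (algebraMap ℚ ℚ_[p])) i j

lemma opNormP_map_le_one {n : Type*} [Fintype n] [DecidableEq n] (m : Matrix n n ℚ)
    (hm : ∀ i j, ¬ p ∣ (m i j).den) : opNormP p (m.map (algebraMap ℚ ℚ_[p])) ≤ 1 :=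
  opNormP_le_one p _ fun i j => by simpa using Padic.norm_rat_le_one (hm i j)

lemma dP_map_eq_zero
    (hgh : ∀ i j, ¬ p ∣ ((g⁻¹ * h).val i j).den)
    (hhg : ∀ i j, ¬ p ∣ ((h⁻¹ * g).val i j).den) :
    dP p (Matrix.GeneralLinearGroup.map (algebraMap ℚ ℚ_[p]) g)
      (Matrix.GeneralLinearGroup.map (algebraMap ℚ ℚ_[p]) h) = 0 := by
  rw [dP, Matrix.GeneralLinearGroup.coe_map_inv_mul, Matrix.GeneralLinearGroup.coe_map_inv_mul,
    lnplus_eq_zero_of_le_one (opNormP_nonneg p _) (opNormP_map_le_one p _ hgh),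
    lnplus_eq_zero_of_le_one (opNormP_nonneg p _) (opNormP_map_le_one p _ hhg), add_zero]

end Entries

lemma summable_dP_map {d : ℕ} (g h : GL (Fin d) ℚ) :
    Summable fun p : Nat.Primes =>
      dP p.1 (Matrix.GeneralLinearGroup.map (algebraMap ℚ ℚ_[p.1]) g)
        (Matrix.GeneralLinearGroup.map (algebraMap ℚ ℚ_[p.1]) h) := by
  set A := (g⁻¹ * h).val
  set B := (h⁻¹ * g).val
  set D := ∏ i, ∏ j, (A i j).den * (B i j).den
  have hD : D ≠ 0 := by simp [D, Finset.prod_eq_zero_iff]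
  have hdvd : ∀ i j, (A i j).den * (B i j).den ∣ D := fun i j =>
    (Finset.dvd_prod_of_mem _ (Finset.mem_univ j)).trans
      (Finset.dvd_prod_of_mem (fun i => ∏ j, (A i j).den * (B i j).den) (Finset.mem_univ i))
  refine summable_of_hasFiniteSupport <|
    ((D.primeFactors.finite_toSet).preimage Subtype.val_injective.injOn).subset
      fun (p : Nat.Primes) hp => ?_
  by_contra hpD
  refine hp (dP_map_eq_zero g h p.1 (fun i j hpA => ?_) (fun i j hpB => ?_))
  · exact hpD <| Nat.mem_primeFactors.mpr
      ⟨p.2, hpA.trans ((dvd_mul_right _ _).trans (hdvd i j)), hD⟩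
  · exact hpD <| Nat.mem_primeFactors.mpr
      ⟨p.2, hpB.trans ((dvd_mul_left _ _).trans (hdvd i j)), hD⟩

lemma padicNorm_eq_pow_of_dvd_den {p : ℕ} [hp : Fact p.Prime] {q : ℚ} (hpq : p ∣ q.den) :
    padicNorm p q = (p : ℚ) ^ q.den.factorization p := by
  have hq : q ≠ 0 := by
    rintro rfl
    exact hp.out.one_lt.ne' (Nat.dvd_one.mp hpq)
  have hnum : padicValInt p q.num = 0 := padicValInt.eq_zero_of_not_dvd fun hpnum =>
    hp.out.one_lt.ne' <| Nat.dvd_one.mp <| q.reduced.gcd_eq_one ▸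
      Nat.dvd_gcd (Int.natCast_dvd.mp hpnum) hpq
  rw [padicNorm.eq_zpow_of_nonzero hq, padicValRat_def, hnum, Nat.factorization_def _ hp.out]
  simp

lemma Rat.log_den_eq_sum_lnplus_padicNorm (q : ℚ) :
    Real.log q.den = ∑ p ∈ q.den.primeFactors, lnplus (padicNorm p q) := by
  rw [Real.log_nat_eq_sum_factorization, Finsupp.sum, Nat.support_factorization]
  refine Finset.sum_congr rfl fun p hp => ?_
  have : Fact p.Prime := ⟨Nat.prime_of_mem_primeFactors hp⟩
  have hp1 : (1 : ℝ) ≤ p := mod_cast this.out.one_le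
  rw [padicNorm_eq_pow_of_dvd_den (Nat.dvd_of_mem_primeFactors hp), lnplus, Rat.cast_pow,
    Rat.cast_natCast, Real.log_pow, max_eq_left (by have := Real.log_nonneg hp1; positivity)]

lemma Rat.log_den_le_tsum (q : ℚ) {f : Nat.Primes → ℝ} (hf : Summable f)
    (hqf : ∀ p : Nat.Primes, lnplus (padicNorm p q) ≤ f p) :
    Real.log q.den ≤ ∑' p, f p := by
  have hinj : Set.InjOn ((↑) : Nat.Primes → ℕ) ((↑) ⁻¹' (q.den.primeFactors : Set ℕ)) :=
    Subtype.val_injective.injOn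
  rw [Rat.log_den_eq_sum_lnplus_padicNorm, ← Finset.sum_preimage Subtype.val _ hinj _
    fun p hp hp' => absurd ⟨⟨p, Nat.prime_of_mem_primeFactors hp⟩, rfl⟩ hp']
  exact (Finset.sum_le_sum fun p _ => hqf p).trans <|
    hf.sum_le_tsum _ fun p _ => (lnplus_nonneg _).trans (hqf p)

lemma Rat.abs_num_le_exp_and_den_le_exp (q : ℚ) {f : Nat.Primes → ℝ} (hf : Summable f)
    (hqf : ∀ p : Nat.Primes, lnplus (padicNorm p q) ≤ f p) {R : ℝ}
    (hR : lnplus |(q : ℝ)| + ∑' p, f p ≤ R) :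
    |(q.num : ℝ)| ≤ Real.exp R ∧ (q.den : ℝ) ≤ Real.exp R := by
  have hden : (q.den : ℝ) ≤ Real.exp (∑' p, f p) := by
    rw [← Real.exp_log (by positivity : (0 : ℝ) < q.den)]
    exact Real.exp_le_exp.mpr (q.log_den_le_tsum hf hqf)
  refine ⟨?_, hden.trans (Real.exp_le_exp.mpr (by linarith [lnplus_nonneg |(q : ℝ)|]))⟩
  calc |(q.num : ℝ)| = |(q : ℝ)| * q.den := by
        rw [← abs_of_nonneg (Nat.cast_nonneg (α := ℝ) q.den), ← abs_mul]
        exact_mod_cast congrArg abs (Rat.mul_den_eq_num q).symm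
    _ ≤ Real.exp (lnplus |(q : ℝ)|) * Real.exp (∑' p, f p) :=
        mul_le_mul (le_exp_lnplus (abs_nonneg _)) hden (by positivity) (by positivity)
    _ ≤ Real.exp R := by rw [← Real.exp_add]; exact Real.exp_le_exp.mpr hR

noncomputable def ratsOfHeightLe (N : ℕ) : Finset ℚ :=
  (Finset.Icc (-(N : ℤ)) N ×ˢ Finset.Icc 1 N).image fun x => (x.1 : ℚ) / x.2

lemma mem_ratsOfHeightLe_floor {q : ℚ} {E : ℝ} (hnum : |(q.num : ℝ)| ≤ E)
    (hden : (q.den : ℝ) ≤ E) : q ∈ ratsOfHeightLe ⌊E⌋₊ := by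
  have hE : 0 ≤ E := (abs_nonneg _).trans hnum
  have hnumN : |q.num| ≤ (⌊E⌋₊ : ℤ) := by
    rw [Int.natCast_floor_eq_floor hE]
    exact Int.le_floor.mpr (mod_cast hnum)
  refine Finset.mem_image.mpr
    ⟨(q.num, q.den), Finset.mem_product.mpr ⟨?_, ?_⟩, q.num_div_den⟩
  · exact Finset.mem_Icc.mpr (abs_le.mp hnumN)
  · exact Finset.mem_Icc.mpr ⟨q.pos, Nat.le_floor hden⟩

lemma card_ratsOfHeightLe_floor_le {E : ℝ} (hE : 1 ≤ E) :
    ((ratsOfHeightLe ⌊E⌋₊).card : ℝ) ≤ 3 * E ^ 2 := by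
  set N := ⌊E⌋₊
  have hN : (N : ℝ) ≤ E := Nat.floor_le (by linarith)
  have hcard : (ratsOfHeightLe N).card ≤ (2 * N + 1) * N := by
    refine Finset.card_image_le.trans_eq ?_
    rw [Finset.card_product, Int.card_Icc, Nat.card_Icc]
    congr 1; omega
  calc ((ratsOfHeightLe N).card : ℝ) ≤ (2 * N + 1) * N := mod_cast hcard
    _ ≤ 3 * E ^ 2 := by nlinarith [Nat.cast_nonneg (α := ℝ) N]

lemma Matrix.GeneralLinearGroup.finite_and_ncard_le_of_entries_mem {n K : Type*} [Fintype n]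
    [DecidableEq n] [CommRing K] (g : GL n K) {s : Set (GL n K)} (S : Finset K)
    (hs : ∀ h ∈ s, ∀ i j, (g⁻¹ * h).val i j ∈ S) :
    s.Finite ∧ s.ncard ≤ S.card ^ (Fintype.card n * Fintype.card n) := by
  set T : Finset (n → n → K) := Fintype.piFinset fun _ => Fintype.piFinset fun _ => S
  set ψ : GL n K → (n → n → K) := fun h => (g⁻¹ * h).val
  have hmaps : Set.MapsTo ψ s T := fun h hh =>
    Fintype.mem_piFinset.mpr fun i => Fintype.mem_piFinset.mpr fun j => hs h hh i j
  have hinj : Set.InjOn ψ s := fun h₁ _ h₂ _ he => mul_left_cancel (Units.ext he)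
  refine ⟨Set.Finite.of_injOn hmaps hinj T.finite_toSet, ?_⟩
  calc s.ncard ≤ (T : Set (n → n → K)).ncard :=
        Set.ncard_le_ncard_of_injOn ψ hmaps hinj T.finite_toSet
    _ = S.card ^ (Fintype.card n * Fintype.card n) := by
        rw [Set.ncard_coe_finset, Fintype.card_piFinset, Finset.prod_const, Fintype.card_piFinset,
          Finset.prod_const, Finset.card_univ, ← pow_mul]

lemma entry_mem_ratsOfHeightLe_of_dQ_le {d : ℕ} {g h : GL (Fin d) ℚ} {R : ℝ}
    (hgh : dQ g h ≤ R) (i j : Fin d) :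
    (g⁻¹ * h).val i j ∈ ratsOfHeightLe ⌊Real.exp R⌋₊ := by
  obtain ⟨hnum, hden⟩ := Rat.abs_num_le_exp_and_den_le_exp _ (summable_dP_map g h)
    (fun p => lnplus_padicNorm_entry_le_dP g h p.1 i j)
    ((add_le_add_left (lnplus_abs_entry_le_dR g h i j) _).trans hgh)
  exact mem_ratsOfHeightLe_floor hnum hden

/-- There is a constant `C > 0` such that every ball `B(g,R) = {h : d(g,h) ≤ R}` in
`GL_d(ℚ)` for the pseudometric `d = Σ_p d_p` is finite of cardinality at most `C·e^{CR}`. -/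
theorem card_ball_dQ_le (d : ℕ) :
    ∃ C : ℝ, 0 < C ∧ ∀ (g : GL (Fin d) ℚ) (R : ℝ), 0 ≤ R →
      {h : GL (Fin d) ℚ | dQ g h ≤ R}.Finite ∧
      (Nat.card {h : GL (Fin d) ℚ | dQ g h ≤ R} : ℝ) ≤ C * Real.exp (C * R) := by
  refine ⟨3 ^ (d * d) + 2 * (d * d), by positivity, fun g R hR => ?_⟩
  obtain ⟨hfin, hcard⟩ := Matrix.GeneralLinearGroup.finite_and_ncard_le_of_entries_mem g
    (s := {h | dQ g h ≤ R}) (ratsOfHeightLe ⌊Real.exp R⌋₊)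
    fun h hh => entry_mem_ratsOfHeightLe_of_dQ_le hh
  rw [Fintype.card_fin] at hcard
  refine ⟨hfin, ?_⟩
  rw [Nat.card_coe_set_eq]
  calc (Set.ncard {h : GL (Fin d) ℚ | dQ g h ≤ R} : ℝ)
      ≤ ((ratsOfHeightLe ⌊Real.exp R⌋₊).card : ℝ) ^ (d * d) := mod_cast hcard
    _ ≤ (3 * Real.exp R ^ 2) ^ (d * d) :=
        pow_le_pow_left₀ (by positivity) (card_ratsOfHeightLe_floor_le (Real.one_le_exp hR)) _
    _ = 3 ^ (d * d) * Real.exp (2 * (d * d) * R) := by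
        rw [mul_pow, ← pow_mul, ← Real.exp_nat_mul]
        push_cast
        ring_nf
    _ ≤ (3 ^ (d * d) + 2 * (d * d)) * Real.exp ((3 ^ (d * d) + 2 * (d * d)) * R) := by
        gcongr <;> linarith [pow_pos (three_pos (α := ℝ)) (d * d), mul_self_nonneg (d : ℝ)]
end

section
/- Let λ_1 ≥ ... ≥ λ_d be real numbers and for a prime p let Λ_n be the diagonal matrix with entries (Λ_n)_{ii} = p^{-⌊nλ_i/ln p⌋}. Let P_p be the group of matrices (u_{ij}) ∈ GL_d(ℚ_p) with u_{ij} = 0 whenever λ_i < λ_j. Then for u ∈ GL_d(ℚ_p): u ∈ P_p if and only if lim_{n→∞} (1/n) ln‖Λ_n⁻¹ u Λ_n‖_p = 0, and this holds if and only if limsup_{n→∞} (1/n) ln‖Λ_n⁻¹ u Λ_n‖_p ≤ 0. -/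
/-!
Conjugating by `Λ_n` multiplies the entry `u_ij` by `p^{⌊nλ_j/ln p⌋ - ⌊nλ_i/ln p⌋}` in absolute
value, and over the ultrametric field `ℚ_p` the operator norm for the sup norm is the largest
absolute value of an entry. Hence `(1/n) ln‖Λ_n⁻¹ u Λ_n‖_p` converges to
`L = max {λ_j - λ_i | u_ij ≠ 0}`, and `L ≤ 0` says exactly that `u ∈ P_p`. Finally `L ≥ 0` for
every invertible `u`: some permutation `σ` has `u_{σ(i) i} ≠ 0` for all `i`, and since
`∑ (λ_i - λ_{σ(i)}) = 0` one of these entries has `λ_i - λ_{σ(i)} ≥ 0`.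
-/

open Matrix
/-- The invertible diagonal matrix with entries `p^(f i)`. -/
noncomputable def diagGL (p : ℕ) [hp : Fact p.Prime] {d : ℕ} (f : Fin d → ℤ) :
    GL (Fin d) ℚ_[p] :=
  ⟨Matrix.diagonal fun i => (p : ℚ_[p]) ^ f i,
   Matrix.diagonal fun i => (p : ℚ_[p]) ^ (-f i),
   by
     rw [Matrix.diagonal_mul_diagonal]
     have hne : (p : ℚ_[p]) ≠ 0 := Nat.cast_ne_zero.mpr hp.out.ne_zero
     simp [mul_inv_cancel₀ (zpow_ne_zero _ hne)],
   by
     rw [Matrix.diagonal_mul_diagonal]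
     have hne : (p : ℚ_[p]) ≠ 0 := Nat.cast_ne_zero.mpr hp.out.ne_zero
     simp [inv_mul_cancel₀ (zpow_ne_zero _ hne)]⟩

/-- `Λ_n`: the diagonal matrix with entries `p^{-⌊nλ_i/ln p⌋}`. -/
noncomputable def LamP (p : ℕ) [Fact p.Prime] {d : ℕ} (lam : Fin d → ℝ) (n : ℕ) :
    GL (Fin d) ℚ_[p] :=
  diagGL p fun i => -⌊(n * lam i) / Real.log p⌋

open Filter Topology Finset

theorem tendsto_intFloor_nat_mul_div (x : ℝ) :
    Tendsto (fun n : ℕ => (⌊n * x⌋ : ℝ) / n) atTop (𝓝 x) := by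
  have hlower : Tendsto (fun n : ℕ => x - 1 / (n : ℝ)) atTop (𝓝 x) := by
    simpa using (tendsto_const_nhds (x := x)).sub tendsto_one_div_atTop_nhds_zero_nat
  refine tendsto_of_tendsto_of_tendsto_of_le_of_le' hlower tendsto_const_nhds ?_ ?_ <;>
    filter_upwards [eventually_gt_atTop 0] with n hn <;>
    have hn' : (0 : ℝ) < n := Nat.cast_pos.2 hn
  · rw [le_div_iff₀ hn', sub_mul, one_div_mul_cancel hn'.ne']
    linarith [Int.sub_one_lt_floor ((n : ℝ) * x)]
  · rw [div_le_iff₀ hn', mul_comm]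
    exact Int.floor_le _

theorem Real.log_finset_sup' {ι : Type*} {s : Finset ι} (hs : s.Nonempty) {f : ι → ℝ}
    (hf : ∀ i ∈ s, 0 < f i) : Real.log (s.sup' hs f) = s.sup' hs fun i => Real.log (f i) := by
  obtain ⟨i, hi, hmax⟩ := s.exists_mem_eq_sup' hs f
  refine le_antisymm (hmax ▸ le_sup' (fun i => Real.log (f i)) hi) (sup'_le _ _ fun j hj => ?_)
  exact Real.log_le_log (hf j hj) (le_sup' f hj)

namespace Matrix

theorem exists_perm_forall_apply_ne_zero {n R : Type*} [Fintype n] [DecidableEq n] [CommRing R]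
    {A : Matrix n n R} (hA : A.det ≠ 0) : ∃ σ : Equiv.Perm n, ∀ i, A (σ i) i ≠ 0 := by
  contrapose! hA
  rw [det_apply]
  refine sum_eq_zero fun σ _ => ?_
  obtain ⟨i, hi⟩ := hA σ
  exact smul_eq_zero_of_right _ (prod_eq_zero (mem_univ i) hi)

section OpNorm

variable {𝕜 m n : Type*} [NontriviallyNormedField 𝕜] [CompleteSpace 𝕜]
  [Fintype m] [Fintype n]

theorem norm_apply_le_opNorm_mulVecLin [DecidableEq n] (A : Matrix m n 𝕜) (i : m) (j : n) :
    ‖A i j‖ ≤ ‖LinearMap.toContinuousLinearMap A.mulVecLin‖ := by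
  have h := (LinearMap.toContinuousLinearMap A.mulVecLin).le_opNorm (Pi.single j 1)
  rw [Pi.norm_single, norm_one, mul_one] at h
  refine le_trans ?_ h
  simpa [mulVec_single] using norm_le_pi_norm (A.col j) i

theorem opNorm_mulVecLin_le_of_forall_norm_apply_le [IsUltrametricDist 𝕜] (A : Matrix m n 𝕜)
    {C : ℝ} (hC : 0 ≤ C) (h : ∀ i j, ‖A i j‖ ≤ C) :
    ‖LinearMap.toContinuousLinearMap A.mulVecLin‖ ≤ C := by
  refine ContinuousLinearMap.opNorm_le_bound _ hC fun v => ?_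
  refine (pi_norm_le_iff_of_nonneg (by positivity)).2 fun i => ?_
  refine IsUltrametricDist.norm_sum_le_of_forall_le_of_nonneg (by positivity) fun j _ => ?_
  rw [norm_mul]
  exact mul_le_mul (h i j) (norm_le_pi_norm v j) (norm_nonneg _) hC

theorem opNorm_mulVecLin_eq_sup' [DecidableEq n] [IsUltrametricDist 𝕜] (A : Matrix m n 𝕜)
    {s : Finset (m × n)} (hs : s.Nonempty) (hA : ∀ i j, A i j ≠ 0 → (i, j) ∈ s) :
    ‖LinearMap.toContinuousLinearMap A.mulVecLin‖ = s.sup' hs fun ij => ‖A ij.1 ij.2‖ := by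
  set F : m × n → ℝ := fun ij => ‖A ij.1 ij.2‖
  have hF : 0 ≤ s.sup' hs F := (norm_nonneg _).trans (le_sup' F hs.choose_spec)
  refine le_antisymm (opNorm_mulVecLin_le_of_forall_norm_apply_le _ hF fun i j => ?_)
    (sup'_le _ _ fun ij _ => norm_apply_le_opNorm_mulVecLin A ij.1 ij.2)
  by_cases hAij : A i j = 0
  · rwa [hAij, norm_zero]
  · exact le_sup' F (hA i j hAij)

end OpNorm

section Support

variable {m n α : Type*} [Fintype m] [Fintype n]

open Classical in
noncomputable def supportFinset [Zero α] (A : Matrix m n α) : Finset (m × n) :=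
  univ.filter fun ij => A ij.1 ij.2 ≠ 0

theorem mem_supportFinset [Zero α] {A : Matrix m n α} {ij : m × n} :
    ij ∈ A.supportFinset ↔ A ij.1 ij.2 ≠ 0 := by
  simp [supportFinset]

theorem sup'_supportFinset_sub_nonpos_iff [Zero α] {A : Matrix m n α}
    (hA : A.supportFinset.Nonempty) (lam : m → ℝ) (mu : n → ℝ) :
    A.supportFinset.sup' hA (fun ij => mu ij.2 - lam ij.1) ≤ 0 ↔
      ∀ i j, lam i < mu j → A i j = 0 := by
  rw [sup'_le_iff]
  constructor
  · intro h i j hlt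
    by_contra hne
    linarith [h (i, j) (mem_supportFinset.2 hne)]
  · intro h ij hij
    by_contra hlt
    exact mem_supportFinset.1 hij (h _ _ (by linarith))

variable [DecidableEq n] [CommRing α] {A : Matrix n n α}

theorem supportFinset_nonempty_of_det_ne_zero [Nonempty n] (hA : A.det ≠ 0) :
    A.supportFinset.Nonempty := by
  obtain ⟨σ, hσ⟩ := exists_perm_forall_apply_ne_zero hA
  obtain ⟨i⟩ := ‹Nonempty n›
  exact ⟨(σ i, i), mem_supportFinset.2 (hσ i)⟩

theorem sup'_supportFinset_sub_nonneg (hA : A.det ≠ 0) (hs : A.supportFinset.Nonempty)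
    (lam : n → ℝ) : 0 ≤ A.supportFinset.sup' hs fun ij => lam ij.2 - lam ij.1 := by
  obtain ⟨σ, hσ⟩ := exists_perm_forall_apply_ne_zero hA
  have : Nonempty n := ⟨hs.choose.1⟩
  obtain ⟨i, -, hi⟩ := exists_le_of_sum_le univ_nonempty (Equiv.sum_comp σ lam).le
  exact (sub_nonneg.2 hi).trans (le_sup' (fun ij : n × n => lam ij.2 - lam ij.1)
    (mem_supportFinset (ij := (σ i, i)).2 (hσ i)))

end Support

end Matrix

section Padic

variable {p : ℕ} [Fact p.Prime] {d : ℕ}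

theorem norm_diagGL_conj_apply (f : Fin d → ℤ) (u : GL (Fin d) ℚ_[p]) (i j : Fin d) :
    ‖(((diagGL p f)⁻¹ * u * diagGL p f : GL (Fin d) ℚ_[p]) : Matrix (Fin d) (Fin d) ℚ_[p]) i j‖
      = ‖(u : Matrix (Fin d) (Fin d) ℚ_[p]) i j‖ * (p : ℝ) ^ (f i - f j) := by
  have hp : (p : ℝ) ≠ 0 := Nat.cast_ne_zero.2 (Fact.out : p.Prime).ne_zero
  change ‖(diagonal (fun i => (p : ℚ_[p]) ^ (-f i)) * (u : Matrix (Fin d) (Fin d) ℚ_[p]) *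
    diagonal fun i => (p : ℚ_[p]) ^ f i) i j‖ = _
  rw [mul_diagonal, diagonal_mul, norm_mul, norm_mul, Padic.norm_p_zpow, Padic.norm_p_zpow,
    neg_neg, zpow_sub₀ hp, _root_.zpow_neg]
  ring

noncomputable def lamConj (lam : Fin d → ℝ) (u : GL (Fin d) ℚ_[p]) (n : ℕ) :
    Matrix (Fin d) (Fin d) ℚ_[p] :=
  ((LamP p lam n)⁻¹ * u * LamP p lam n : GL (Fin d) ℚ_[p])

theorem norm_lamConj_apply (lam : Fin d → ℝ) (u : GL (Fin d) ℚ_[p]) (n : ℕ) (i j : Fin d) :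
    ‖lamConj lam u n i j‖ = ‖(u : Matrix (Fin d) (Fin d) ℚ_[p]) i j‖ *
      (p : ℝ) ^ (⌊n * lam j / Real.log p⌋ - ⌊n * lam i / Real.log p⌋) := by
  rw [lamConj, LamP, norm_diagGL_conj_apply, neg_sub_neg]

theorem tendsto_log_norm_lamConj_apply (lam : Fin d → ℝ) (u : GL (Fin d) ℚ_[p]) {i j : Fin d}
    (hij : (u : Matrix (Fin d) (Fin d) ℚ_[p]) i j ≠ 0) :
    Tendsto (fun n : ℕ => (1 / (n : ℝ)) * Real.log ‖lamConj lam u n i j‖) atTop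
      (𝓝 (lam j - lam i)) := by
  have hp : 1 < (p : ℝ) := Nat.one_lt_cast.2 (Fact.out : p.Prime).one_lt
  have hlogp : Real.log p ≠ 0 := (Real.log_pos hp).ne'
  have hfloor (k : Fin d) : Tendsto (fun n : ℕ => (⌊n * lam k / Real.log p⌋ : ℝ) / n * Real.log p)
      atTop (𝓝 (lam k)) := by
    simpa [mul_div_assoc, div_mul_cancel₀ _ hlogp] using
      (tendsto_intFloor_nat_mul_div (lam k / Real.log p)).mul_const (Real.log p)
  have hlim := ((tendsto_one_div_atTop_nhds_zero_nat.mul_const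
    (Real.log ‖(u : Matrix (Fin d) (Fin d) ℚ_[p]) i j‖)).add (hfloor j)).sub (hfloor i)
  rw [zero_mul, zero_add] at hlim
  refine hlim.congr' ((eventually_ne_atTop 0).mono fun n hn => ?_)
  beta_reduce
  rw [norm_lamConj_apply, Real.log_mul (norm_ne_zero_iff.2 hij) (zpow_ne_zero _ (by positivity)),
    Real.log_zpow]
  push_cast
  field_simp
  ring

theorem tendsto_log_opNormP_lamConj (lam : Fin d → ℝ) (u : GL (Fin d) ℚ_[p])
    (hu : (u : Matrix (Fin d) (Fin d) ℚ_[p]).supportFinset.Nonempty) :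
    Tendsto (fun n : ℕ => (1 / (n : ℝ)) * Real.log (opNormP p (lamConj lam u n))) atTop
      (𝓝 ((u : Matrix (Fin d) (Fin d) ℚ_[p]).supportFinset.sup' hu
        fun ij => lam ij.2 - lam ij.1)) := by
  have hp : (0 : ℝ) < p := Nat.cast_pos.2 (Fact.out : p.Prime).pos
  have hpos (n : ℕ) (ij) (hij : ij ∈ (u : Matrix (Fin d) (Fin d) ℚ_[p]).supportFinset) :
      0 < ‖lamConj lam u n ij.1 ij.2‖ := by
    rw [norm_lamConj_apply]
    exact mul_pos (norm_pos_iff.2 (mem_supportFinset.1 hij)) (zpow_pos hp _)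
  have hsupp (n : ℕ) (i j : Fin d) (h : lamConj lam u n i j ≠ 0) :
      (i, j) ∈ (u : Matrix (Fin d) (Fin d) ℚ_[p]).supportFinset := by
    refine mem_supportFinset.2 fun h0 => h ?_
    rw [← norm_eq_zero, norm_lamConj_apply, h0, norm_zero, zero_mul]
  refine (Tendsto.finset_sup'_nhds_apply hu fun ij hij =>
    tendsto_log_norm_lamConj_apply lam u (mem_supportFinset.1 hij)).congr fun n => ?_
  rw [opNormP, opNorm_mulVecLin_eq_sup' _ hu (hsupp n), Real.log_finset_sup' hu (hpos n),
    mul₀_sup' (by positivity)]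

end Padic

theorem mem_parabolic_iff_tendsto_general (p : ℕ) [Fact p.Prime] (d : ℕ)
    (lam : Fin d → ℝ) (u : GL (Fin d) ℚ_[p]) :
    ((∀ i j : Fin d, lam i < lam j → (u : Matrix (Fin d) (Fin d) ℚ_[p]) i j = 0) ↔
      Tendsto
        (fun n : ℕ => (1 / (n : ℝ)) *
          Real.log (opNormP p (((LamP p lam n)⁻¹ * u * LamP p lam n :
            GL (Fin d) ℚ_[p]) : Matrix (Fin d) (Fin d) ℚ_[p])))
        atTop (nhds 0))
    ∧
    ((∀ i j : Fin d, lam i < lam j → (u : Matrix (Fin d) (Fin d) ℚ_[p]) i j = 0) ↔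
      Filter.limsup
        (fun n : ℕ => (1 / (n : ℝ)) *
          Real.log (opNormP p (((LamP p lam n)⁻¹ * u * LamP p lam n :
            GL (Fin d) ℚ_[p]) : Matrix (Fin d) (Fin d) ℚ_[p])))
        atTop ≤ 0) := by
  set f := fun n : ℕ => (1 / (n : ℝ)) * Real.log (opNormP p (lamConj lam u n))
  show (_ ↔ Tendsto f atTop (𝓝 0)) ∧ (_ ↔ limsup f atTop ≤ 0)
  rcases isEmpty_or_nonempty (Fin d) with hd | hd
  · have hf : f = fun _ => 0 := funext fun n => by simp [f, opNormP]
    simp only [hf, IsEmpty.forall_iff, true_iff, limsup_const, le_refl, and_true]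
    exact tendsto_const_nhds
  have hu := supportFinset_nonempty_of_det_ne_zero u.det_ne_zero
  have hT := tendsto_log_opNormP_lamConj lam u hu
  have hL := sup'_supportFinset_sub_nonneg u.det_ne_zero hu lam
  rw [← sup'_supportFinset_sub_nonpos_iff hu, hT.limsup_eq]
  exact ⟨⟨fun h => le_antisymm h hL ▸ hT, fun h => (tendsto_nhds_unique hT h).le⟩, Iff.rfl⟩

open Filter in
/-- For `λ_1 ≥ ... ≥ λ_d` and `Λ_n = diag(p^{-⌊nλ_i/ln p⌋})`, a matrix `u ∈ GL_d(ℚ_p)`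
lies in the parabolic subgroup `P_p = {u : u_{ij} = 0 whenever λ_i < λ_j}` iff
`(1/n)·ln‖Λ_n⁻¹ u Λ_n‖_p → 0`, iff `limsup (1/n)·ln‖Λ_n⁻¹ u Λ_n‖_p ≤ 0`. -/
theorem mem_parabolic_iff_tendsto (p : ℕ) [Fact p.Prime] (d : ℕ)
    (lam : Fin d → ℝ) (hlam : Antitone lam) (u : GL (Fin d) ℚ_[p]) :
    ((∀ i j : Fin d, lam i < lam j → (u : Matrix (Fin d) (Fin d) ℚ_[p]) i j = 0) ↔
      Tendsto
        (fun n : ℕ => (1 / (n : ℝ)) *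
          Real.log (opNormP p (((LamP p lam n)⁻¹ * u * LamP p lam n :
            GL (Fin d) ℚ_[p]) : Matrix (Fin d) (Fin d) ℚ_[p])))
        atTop (nhds 0))
    ∧
    ((∀ i j : Fin d, lam i < lam j → (u : Matrix (Fin d) (Fin d) ℚ_[p]) i j = 0) ↔
      Filter.limsup
        (fun n : ℕ => (1 / (n : ℝ)) *
          Real.log (opNormP p (((LamP p lam n)⁻¹ * u * LamP p lam n :
            GL (Fin d) ℚ_[p]) : Matrix (Fin d) (Fin d) ℚ_[p])))
        atTop ≤ 0) :=
  mem_parabolic_iff_tendsto_general p d lam u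
end

section
/- Let λ_1 ≥ ... ≥ λ_d be real numbers, Λ_n the diagonal matrix with (Λ_n)_{ii} = e^{nλ_i} (real case). Then a matrix u ∈ GL_d(ℝ) satisfies u_{ij} = 0 whenever λ_i < λ_j if and only if lim_{n→∞} (1/n)·ln‖Λ_n⁻¹ u Λ_n‖ = 0. -/
/-! Conjugation by `Λ_n` multiplies the entry `u i j` by `exp (n (λ j - λ i))`, and the operator
norm is comparable to the largest entry in absolute value. If `u` vanishes wherever `λ i < λ j`,
the conjugates are therefore bounded; they are also bounded away from `0`, because some nonzero
entry of the invertible `u` has `λ i ≤ λ j` (read off a nonzero term of the Leibniz expansion of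
`det u`). Conversely, a nonzero entry with `λ i < λ j` forces the norm to grow at least like
`exp (n (λ j - λ i))`. -/

open Matrix

/-- `Λ_n`: the invertible real diagonal matrix with entries `e^{nλ_i}`. -/
noncomputable def LamR {d : ℕ} (lam : Fin d → ℝ) (n : ℕ) : GL (Fin d) ℝ :=
  ⟨Matrix.diagonal fun i => Real.exp (n * lam i),
   Matrix.diagonal fun i => Real.exp (-(n * lam i)),
   by rw [Matrix.diagonal_mul_diagonal]; simp [← Real.exp_add],
   by rw [Matrix.diagonal_mul_diagonal]; simp [← Real.exp_add]⟩

open Filter Topology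

namespace Matrix

open scoped Norms.L2Operator

variable {𝕜 m n : Type*} [RCLike 𝕜] [Fintype m] [Fintype n] [DecidableEq n]

lemma norm_apply_le_l2_opNorm (A : Matrix m n 𝕜) (i : m) (j : n) : ‖A i j‖ ≤ ‖A‖ := by
  set T := (toEuclideanLin (𝕜 := 𝕜) (m := m) (n := n)).trans LinearMap.toContinuousLinearMap A
  calc ‖A i j‖ = ‖T (EuclideanSpace.single j 1) i‖ := by
        simp [T, toLpLin_apply, mulVec_single]
    _ ≤ ‖T (EuclideanSpace.single j 1)‖ := PiLp.norm_apply_le _ i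
    _ ≤ ‖T‖ * ‖EuclideanSpace.single j (1 : 𝕜)‖ := T.le_opNorm _
    _ = ‖A‖ := by rw [PiLp.norm_single, norm_one, mul_one, l2_opNorm_def]

variable [DecidableEq m]

lemma l2_opNorm_single_le (i : m) (j : n) (c : 𝕜) : ‖(single i j c : Matrix m n 𝕜)‖ ≤ ‖c‖ := by
  rw [l2_opNorm_def]
  refine ContinuousLinearMap.opNorm_le_bound _ (norm_nonneg c) fun x => ?_
  calc _ = ‖EuclideanSpace.single i (c * x j)‖ := by
        congr 1
        ext k
        simp [toLpLin_apply, single_mulVec, Function.update_apply]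
    _ ≤ ‖c‖ * ‖x‖ := by
        rw [PiLp.norm_single, norm_mul]
        gcongr
        exact PiLp.norm_apply_le x j

lemma l2_opNorm_le_sum_norm_apply (A : Matrix m n 𝕜) : ‖A‖ ≤ ∑ i, ∑ j, ‖A i j‖ :=
  calc ‖A‖ = ‖∑ i, ∑ j, single i j (A i j)‖ := congrArg _ (matrix_eq_sum_single A)
    _ ≤ ∑ i, ‖∑ j, single i j (A i j)‖ := norm_sum_le _ _
    _ ≤ ∑ i, ∑ j, ‖A i j‖ := by
        gcongr with i
        exact (norm_sum_le _ _).trans (Finset.sum_le_sum fun j _ => l2_opNorm_single_le i j _)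

end Matrix

lemma Matrix.exists_apply_ne_zero_and_le_of_det_ne_zero {n R M : Type*} [Fintype n]
    [DecidableEq n] [Nonempty n] [CommRing R] [AddCommMonoid M] [LinearOrder M]
    [IsOrderedCancelAddMonoid M] {A : Matrix n n R} (hA : A.det ≠ 0) (w : n → M) :
    ∃ i j, A i j ≠ 0 ∧ w i ≤ w j := by
  rw [det_apply] at hA
  obtain ⟨σ, -, hσ⟩ := Finset.exists_ne_zero_of_sum_ne_zero hA
  -- `σ` permutes the weights, so it cannot raise all of them
  obtain ⟨k, -, hk⟩ :=
    Finset.exists_le_of_sum_le Finset.univ_nonempty (Equiv.sum_comp σ w).le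
  refine ⟨σ k, k, fun h => hσ ?_, hk⟩
  rw [Finset.prod_eq_zero (f := fun k => A (σ k) k) (Finset.mem_univ k) h, smul_zero]

section opNormR

variable {d : ℕ}

lemma abs_apply_le_opNormR (g : Matrix (Fin d) (Fin d) ℝ) (i j : Fin d) :
    |g i j| ≤ opNormR g :=
  g.norm_apply_le_l2_opNorm i j

lemma opNormR_le_sum_abs (g : Matrix (Fin d) (Fin d) ℝ) : opNormR g ≤ ∑ i, ∑ j, |g i j| :=
  g.l2_opNorm_le_sum_norm_apply

lemma LamR_inv_mul_mul_LamR_apply (lam : Fin d → ℝ) (u : GL (Fin d) ℝ) (n : ℕ) (i j : Fin d) :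
    (((LamR lam n)⁻¹ * u * LamR lam n : GL (Fin d) ℝ) : Matrix (Fin d) (Fin d) ℝ) i j
      = (u : Matrix (Fin d) (Fin d) ℝ) i j * Real.exp (n * (lam j - lam i)) := by
  change (diagonal (fun i => Real.exp (-(n * lam i))) * (u : Matrix (Fin d) (Fin d) ℝ)
    * diagonal (fun i => Real.exp (n * lam i))) i j = _
  rw [mul_diagonal, diagonal_mul, mul_sub, sub_eq_add_neg, Real.exp_add]
  ring

lemma abs_mul_exp_le_opNormR_LamR_conj (lam : Fin d → ℝ) (u : GL (Fin d) ℝ) (n : ℕ)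
    (i j : Fin d) :
    |(u : Matrix (Fin d) (Fin d) ℝ) i j| * Real.exp (n * (lam j - lam i))
      ≤ opNormR (((LamR lam n)⁻¹ * u * LamR lam n : GL (Fin d) ℝ) : Matrix (Fin d) (Fin d) ℝ) := by
  have h := abs_apply_le_opNormR
    (((LamR lam n)⁻¹ * u * LamR lam n : GL (Fin d) ℝ) : Matrix (Fin d) (Fin d) ℝ) i j
  rwa [LamR_inv_mul_mul_LamR_apply, abs_mul, Real.abs_exp] at h

lemma opNormR_LamR_conj_le {lam : Fin d → ℝ} {u : GL (Fin d) ℝ}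
    (hu : ∀ i j : Fin d, lam i < lam j → (u : Matrix (Fin d) (Fin d) ℝ) i j = 0) (n : ℕ) :
    opNormR (((LamR lam n)⁻¹ * u * LamR lam n : GL (Fin d) ℝ) : Matrix (Fin d) (Fin d) ℝ)
      ≤ ∑ i, ∑ j, |(u : Matrix (Fin d) (Fin d) ℝ) i j| := by
  refine (opNormR_le_sum_abs _).trans
    (Finset.sum_le_sum fun i _ => Finset.sum_le_sum fun j _ => ?_)
  rw [LamR_inv_mul_mul_LamR_apply, abs_mul, Real.abs_exp]
  rcases lt_or_ge (lam i) (lam j) with hij | hji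
  · simp [hu i j hij]
  · refine mul_le_of_le_one_right (abs_nonneg _) (Real.exp_le_one_iff.2 ?_)
    exact mul_nonpos_of_nonneg_of_nonpos n.cast_nonneg (sub_nonpos.2 hji)

end opNormR

lemma tendsto_inv_mul_log_of_le_of_le {f : ℕ → ℝ} {c C : ℝ} (hc : 0 < c) (hcf : ∀ n, c ≤ f n)
    (hfC : ∀ n, f n ≤ C) :
    Tendsto (fun n : ℕ => (1 / (n : ℝ)) * Real.log (f n)) atTop (𝓝 0) := by
  have hconst (a : ℝ) : Tendsto (fun n : ℕ => (1 / (n : ℝ)) * a) atTop (𝓝 0) := by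
    simpa only [one_div_mul_eq_div] using tendsto_const_div_atTop_nhds_zero_nat a
  refine tendsto_of_tendsto_of_tendsto_of_le_of_le (hconst (Real.log c)) (hconst (Real.log C))
    (fun n => ?_) (fun n => ?_)
  · exact mul_le_mul_of_nonneg_left (Real.log_le_log hc (hcf n)) (by positivity)
  · exact mul_le_mul_of_nonneg_left
      (Real.log_le_log (hc.trans_le (hcf n)) (hfC n)) (by positivity)

lemma le_of_tendsto_inv_mul_log {f : ℕ → ℝ} {a δ L : ℝ} (ha : 0 < a)
    (haf : ∀ n : ℕ, a * Real.exp (n * δ) ≤ f n)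
    (hf : Tendsto (fun n : ℕ => (1 / (n : ℝ)) * Real.log (f n)) atTop (𝓝 L)) : δ ≤ L := by
  have hlower : Tendsto (fun n : ℕ => (1 / (n : ℝ)) * Real.log a + δ) atTop (𝓝 δ) := by
    simpa only [one_div_mul_eq_div, zero_add] using
      (tendsto_const_div_atTop_nhds_zero_nat (Real.log a)).add_const δ
  refine le_of_tendsto_of_tendsto hlower hf ?_
  filter_upwards [eventually_ge_atTop 1] with n hn_one
  have hn : (0 : ℝ) < n := by exact_mod_cast hn_one
  have hlog : Real.log a + n * δ ≤ Real.log (f n) := by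
    simpa [Real.log_mul ha.ne' (Real.exp_pos _).ne', Real.log_exp]
      using Real.log_le_log (by positivity) (haf n)
  calc (1 / (n : ℝ)) * Real.log a + δ = (1 / (n : ℝ)) * (Real.log a + n * δ) := by
        field_simp
    _ ≤ (1 / (n : ℝ)) * Real.log (f n) := by gcongr

open Filter in
theorem mem_parabolic_iff_tendsto_real_general (d : ℕ)
    (lam : Fin d → ℝ) (u : GL (Fin d) ℝ) :
    (∀ i j : Fin d, lam i < lam j → (u : Matrix (Fin d) (Fin d) ℝ) i j = 0) ↔
      Tendsto
        (fun n : ℕ => (1 / (n : ℝ)) *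
          Real.log (opNormR (((LamR lam n)⁻¹ * u * LamR lam n :
            GL (Fin d) ℝ) : Matrix (Fin d) (Fin d) ℝ)))
        atTop (nhds 0) := by
  constructor
  · intro hu
    rcases isEmpty_or_nonempty (Fin d) with hd | hd
    · have hzero (g : Matrix (Fin d) (Fin d) ℝ) : opNormR g = 0 :=
        le_antisymm (by simpa using opNormR_le_sum_abs g) (norm_nonneg _)
      simpa only [hzero, Real.log_zero, mul_zero] using tendsto_const_nhds
    obtain ⟨i, j, hij, hle⟩ := exists_apply_ne_zero_and_le_of_det_ne_zero u.det_ne_zero lam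
    refine tendsto_inv_mul_log_of_le_of_le (abs_pos.2 hij) (fun n => ?_) (opNormR_LamR_conj_le hu)
    refine le_trans ?_ (abs_mul_exp_le_opNormR_LamR_conj lam u n i j)
    exact le_mul_of_one_le_right (abs_nonneg _)
      (Real.one_le_exp (mul_nonneg n.cast_nonneg (sub_nonneg.2 hle)))
  · intro hlim i j hij
    by_contra hne
    exact (le_of_tendsto_inv_mul_log (abs_pos.2 hne)
      (abs_mul_exp_le_opNormR_LamR_conj lam u · i j) hlim).not_gt (sub_pos.2 hij)

open Filter in
/-- For `λ_1 ≥ ... ≥ λ_d` and `Λ_n = diag(e^{nλ_i})`, a matrix `u ∈ GL_d(ℝ)` satisfies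
`u_{ij} = 0` whenever `λ_i < λ_j` iff `(1/n)·ln‖Λ_n⁻¹ u Λ_n‖ → 0`. -/
theorem mem_parabolic_iff_tendsto_real (d : ℕ)
    (lam : Fin d → ℝ) (hlam : Antitone lam) (u : GL (Fin d) ℝ) :
    (∀ i j : Fin d, lam i < lam j → (u : Matrix (Fin d) (Fin d) ℝ) i j = 0) ↔
      Tendsto
        (fun n : ℕ => (1 / (n : ℝ)) *
          Real.log (opNormR (((LamR lam n)⁻¹ * u * LamR lam n :
            GL (Fin d) ℝ) : Matrix (Fin d) (Fin d) ℝ)))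
        atTop (nhds 0) :=
  mem_parabolic_iff_tendsto_real_general d lam u
end

section
/- Suppose b₁, b₂ ∈ GL_d(ℚ_p) and a sequence x_n ∈ GL_d(ℚ_p) satisfy (1/n)·ln‖Λ_n⁻¹ b₁⁻¹ x_n‖_p → 0 and (1/n)·ln‖x_n⁻¹ b₂ Λ_n‖_p → 0 as n → ∞, where Λ_n is the diagonal matrix with (Λ_n)_{ii} = p^{-⌊nλ_i/ln p⌋} for fixed reals λ_1 ≥ ... ≥ λ_d. Then b₁⁻¹b₂ belongs to the parabolic subgroup P_p = {u : u_{ij} = 0 whenever λ_i < λ_j}. -/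
open Matrix
/-! Write `u = b₁⁻¹ b₂`. The product of the two matrices in the hypotheses is `Λ_n⁻¹ u Λ_n`,
whose `(i, j)` entry has absolute value `p^(⌊nλ_j / ln p⌋ - ⌊nλ_i / ln p⌋) |u_ij|`, of order
`e^(n(λ_j - λ_i)) |u_ij|`. An entry is bounded by the operator norm, which is submultiplicative,
so `(1/n) ln` of this entry is at most the sum of the two sequences of the hypotheses, which
tends to `0`. Hence `u_ij ≠ 0` forces `λ_j ≤ λ_i`. -/

open Filter Topology

section OpNorm

variable {p : ℕ} [Fact p.Prime] {n : Type*} [Fintype n] [DecidableEq n]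

lemma opNormP_mul_le (A B : Matrix n n ℚ_[p]) :
    opNormP p (A * B) ≤ opNormP p A * opNormP p B := by
  have hcomp : LinearMap.toContinuousLinearMap (A * B).mulVecLin
      = (LinearMap.toContinuousLinearMap A.mulVecLin).comp
        (LinearMap.toContinuousLinearMap B.mulVecLin) := by
    ext v
    simp [Matrix.mulVecLin_mul]
  unfold opNormP
  rw [hcomp]
  exact ContinuousLinearMap.opNorm_comp_le _ _

lemma norm_apply_le_opNormP (A : Matrix n n ℚ_[p]) (i j : n) : ‖A i j‖ ≤ opNormP p A := by
  have h := (LinearMap.toContinuousLinearMap A.mulVecLin).le_opNorm (Pi.single j 1)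
  exact (norm_le_pi_norm (A.col j) i).trans (by simpa [opNormP, Pi.norm_single] using h)

lemma log_norm_mul_apply_le {A B : Matrix n n ℚ_[p]} {i j : n} (hAB : (A * B) i j ≠ 0) :
    Real.log ‖(A * B) i j‖ ≤ Real.log (opNormP p A) + Real.log (opNormP p B) := by
  have hle := (norm_apply_le_opNormP (A * B) i j).trans (opNormP_mul_le A B)
  have hprod : opNormP p A * opNormP p B ≠ 0 := (lt_of_lt_of_le (norm_pos_iff.2 hAB) hle).ne'
  rw [← Real.log_mul (left_ne_zero_of_mul hprod) (right_ne_zero_of_mul hprod)]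
  exact Real.log_le_log (norm_pos_iff.2 hAB) hle

end OpNorm

lemma norm_diagGL_inv_mul_mul_diagGL_apply {p : ℕ} [Fact p.Prime] {d : ℕ} (f : Fin d → ℤ)
    (u : Matrix (Fin d) (Fin d) ℚ_[p]) (i j : Fin d) :
    ‖((((diagGL p f)⁻¹ : GL (Fin d) ℚ_[p]) : Matrix (Fin d) (Fin d) ℚ_[p]) * u *
        (diagGL p f : GL (Fin d) ℚ_[p])) i j‖ = (p : ℝ) ^ (f i - f j) * ‖u i j‖ := by
  have hp : (p : ℝ) ≠ 0 := Nat.cast_ne_zero.2 (Fact.out : p.Prime).ne_zero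
  change ‖(Matrix.diagonal (fun k => (p : ℚ_[p]) ^ (-f k)) * u *
    Matrix.diagonal fun k => (p : ℚ_[p]) ^ f k) i j‖ = _
  rw [Matrix.mul_diagonal, Matrix.diagonal_mul, norm_mul, norm_mul, Padic.norm_p_zpow,
    Padic.norm_p_zpow, neg_neg, sub_eq_add_neg, zpow_add₀ hp]
  ring

lemma tendsto_floor_mul_div (t : ℝ) :
    Tendsto (fun n : ℕ => (⌊n * t⌋ : ℝ) / n) atTop (𝓝 t) := by
  have hlower : Tendsto (fun n : ℕ => t - 1 / (n : ℝ)) atTop (𝓝 t) := by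
    simpa using (tendsto_const_nhds (x := t)).sub tendsto_one_div_atTop_nhds_zero_nat
  refine tendsto_of_tendsto_of_tendsto_of_le_of_le' hlower tendsto_const_nhds ?_ ?_
  all_goals
    filter_upwards [eventually_gt_atTop 0] with n hn
    have hn : (0 : ℝ) < n := Nat.cast_pos.2 hn
  · rw [le_div_iff₀ hn, sub_mul, one_div_mul_cancel hn.ne', mul_comm]
    exact (Int.sub_one_lt_floor _).le
  · rw [div_le_iff₀ hn, mul_comm t]
    exact Int.floor_le _

lemma tendsto_log_norm_LamP_conj_apply {p : ℕ} [Fact p.Prime] {d : ℕ} (lam : Fin d → ℝ)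
    (u : Matrix (Fin d) (Fin d) ℚ_[p]) {i j : Fin d} (hu : u i j ≠ 0) :
    Tendsto (fun n : ℕ => (1 / (n : ℝ)) * Real.log
        ‖((((LamP p lam n)⁻¹ : GL (Fin d) ℚ_[p]) : Matrix (Fin d) (Fin d) ℚ_[p]) * u *
          (LamP p lam n : GL (Fin d) ℚ_[p])) i j‖) atTop (𝓝 (lam j - lam i)) := by
  have hL : Real.log p ≠ 0 :=
    (Real.log_pos (Nat.one_lt_cast.2 (Fact.out : p.Prime).one_lt)).ne'
  have hp : (0 : ℝ) < p := Nat.cast_pos.2 (Fact.out : p.Prime).pos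
  have hfloor (k : Fin d) := (tendsto_floor_mul_div (lam k / Real.log p)).mul_const (Real.log p)
  have hlim := ((hfloor j).sub (hfloor i)).add
    (tendsto_one_div_atTop_nhds_zero_nat.mul_const (Real.log ‖u i j‖))
  rw [← sub_mul, div_sub_div_same, div_mul_cancel₀ _ hL, zero_mul, add_zero] at hlim
  refine hlim.congr fun n => ?_
  rw [LamP, norm_diagGL_inv_mul_mul_diagGL_apply, Real.log_mul (zpow_pos hp _).ne'
    (norm_ne_zero_iff.2 hu), Real.log_zpow]
  simp only [mul_div_assoc']
  push_cast
  ring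

theorem mem_parabolic_of_tendsto_general (p : ℕ) [Fact p.Prime] (d : ℕ)
    (lam : Fin d → ℝ)
    (b₁ b₂ : GL (Fin d) ℚ_[p]) (x : ℕ → GL (Fin d) ℚ_[p])
    (h₁ : Tendsto (fun n : ℕ => (1 / (n : ℝ)) *
        Real.log (opNormP p (((LamP p lam n)⁻¹ * b₁⁻¹ * x n : GL (Fin d) ℚ_[p]) :
          Matrix (Fin d) (Fin d) ℚ_[p]))) atTop (nhds 0))
    (h₂ : Tendsto (fun n : ℕ => (1 / (n : ℝ)) *
        Real.log (opNormP p (((x n)⁻¹ * b₂ * LamP p lam n : GL (Fin d) ℚ_[p]) :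
          Matrix (Fin d) (Fin d) ℚ_[p]))) atTop (nhds 0)) :
    ∀ i j : Fin d, lam i < lam j →
      ((b₁⁻¹ * b₂ : GL (Fin d) ℚ_[p]) : Matrix (Fin d) (Fin d) ℚ_[p]) i j = 0 := by
  intro i j hij
  by_contra hu
  set u : Matrix (Fin d) (Fin d) ℚ_[p] :=
    ((b₁⁻¹ * b₂ : GL (Fin d) ℚ_[p]) : Matrix (Fin d) (Fin d) ℚ_[p])
  set conj : ℕ → Matrix (Fin d) (Fin d) ℚ_[p] := fun n =>
    (((LamP p lam n)⁻¹ : GL (Fin d) ℚ_[p]) : Matrix (Fin d) (Fin d) ℚ_[p]) * u *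
      (LamP p lam n : GL (Fin d) ℚ_[p])
  have hconj (n : ℕ) : (((LamP p lam n)⁻¹ * b₁⁻¹ * x n : GL (Fin d) ℚ_[p]) :
      Matrix (Fin d) (Fin d) ℚ_[p]) * ((x n)⁻¹ * b₂ * LamP p lam n : GL (Fin d) ℚ_[p])
        = conj n := by
    simp only [conj, u, ← Units.val_mul]
    congr 1
    group
  have hconj_ne (n : ℕ) : conj n i j ≠ 0 := by
    rw [← norm_ne_zero_iff]
    simp only [conj, LamP, norm_diagGL_inv_mul_mul_diagGL_apply]
    exact mul_ne_zero (zpow_ne_zero _ (Nat.cast_ne_zero.2 (Fact.out : p.Prime).ne_zero))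
      (norm_ne_zero_iff.2 hu)
  have hle (n : ℕ) : (1 / (n : ℝ)) * Real.log ‖conj n i j‖ ≤
      (1 / (n : ℝ)) * Real.log (opNormP p (((LamP p lam n)⁻¹ * b₁⁻¹ * x n :
        GL (Fin d) ℚ_[p]) : Matrix (Fin d) (Fin d) ℚ_[p])) +
      (1 / (n : ℝ)) * Real.log (opNormP p (((x n)⁻¹ * b₂ * LamP p lam n :
        GL (Fin d) ℚ_[p]) : Matrix (Fin d) (Fin d) ℚ_[p])) := by
    rw [← mul_add, ← hconj n]
    exact mul_le_mul_of_nonneg_left (log_norm_mul_apply_le (hconj n ▸ hconj_ne n))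
      (by positivity)
  have := le_of_tendsto_of_tendsto' (tendsto_log_norm_LamP_conj_apply lam u hu) (h₁.add h₂) hle
  linarith

open Filter in
/-- If `(1/n)·ln‖Λ_n⁻¹ b₁⁻¹ x_n‖_p → 0` and `(1/n)·ln‖x_n⁻¹ b₂ Λ_n‖_p → 0`, then
`b₁⁻¹ b₂` belongs to the parabolic subgroup `P_p = {u : u_{ij} = 0 whenever λ_i < λ_j}`. -/
theorem mem_parabolic_of_tendsto (p : ℕ) [Fact p.Prime] (d : ℕ)
    (lam : Fin d → ℝ) (hlam : Antitone lam)
    (b₁ b₂ : GL (Fin d) ℚ_[p]) (x : ℕ → GL (Fin d) ℚ_[p])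
    (h₁ : Tendsto (fun n : ℕ => (1 / (n : ℝ)) *
        Real.log (opNormP p (((LamP p lam n)⁻¹ * b₁⁻¹ * x n : GL (Fin d) ℚ_[p]) :
          Matrix (Fin d) (Fin d) ℚ_[p]))) atTop (nhds 0))
    (h₂ : Tendsto (fun n : ℕ => (1 / (n : ℝ)) *
        Real.log (opNormP p (((x n)⁻¹ * b₂ * LamP p lam n : GL (Fin d) ℚ_[p]) :
          Matrix (Fin d) (Fin d) ℚ_[p]))) atTop (nhds 0)) :
    ∀ i j : Fin d, lam i < lam j →
      ((b₁⁻¹ * b₂ : GL (Fin d) ℚ_[p]) : Matrix (Fin d) (Fin d) ℚ_[p]) i j = 0 :=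
  mem_parabolic_of_tendsto_general p d lam b₁ b₂ x h₁ h₂
end
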